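/- arXiv:1907.05699 — 3 statements merged into one kernel-verified Lean document; each statement's English description precedes it below -/
import Mathlib

section
/- Let β, v : ℝ³ → ℝ³ be twice continuously differentiable vector fields. Then, pointwise on ℝ³, curl((β·∇)v) = (β·∇)(curl v) + ((∇β)ᵗ × ∇v), where ∇v denotes the Jacobian matrix with entries (∇v)_{ij} = ∂_j v_i and × is the row-wise matrix cross product defined in the context. -/
/-! By the product rule and the symmetry of second derivatives of `v`,
`∂ᵢ((β·∇)v)ₖ = Σⱼ ∂ᵢβⱼ ∂ⱼvₖ + (β·∇)(∂ᵢvₖ)`. In the antisymmetric combination defining the curl,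
the second terms assemble to `(β·∇)(curl v)` and the first to the row-wise cross product
of `(∇β)ᵗ` with `∇v`. -/

/-- Partial derivative in direction `j` of a scalar function on `ℝ³`. -/
noncomputable def pd3 (j : Fin 3) (f : (Fin 3 → ℝ) → ℝ) (x : Fin 3 → ℝ) : ℝ :=
  fderiv ℝ f x (Pi.single j 1)

/-- The curl of a vector field on `ℝ³`:
`curl v = (∂₂v₃ − ∂₃v₂, ∂₃v₁ − ∂₁v₃, ∂₁v₂ − ∂₂v₁)`. -/
noncomputable def curl3 (v : (Fin 3 → ℝ) → Fin 3 → ℝ) (x : Fin 3 → ℝ) : Fin 3 → ℝ :=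
  ![pd3 1 (fun y => v y 2) x - pd3 2 (fun y => v y 1) x,
    pd3 2 (fun y => v y 0) x - pd3 0 (fun y => v y 2) x,
    pd3 0 (fun y => v y 1) x - pd3 1 (fun y => v y 0) x]

/-- The convective derivative `(β·∇)v`, with components `((β·∇)v)_i = Σ_j β_j ∂_j v_i`. -/
noncomputable def convect3 (β v : (Fin 3 → ℝ) → Fin 3 → ℝ) (x : Fin 3 → ℝ) : Fin 3 → ℝ :=
  fun i => ∑ j, β x j * pd3 j (fun y => v y i) x

/-- For `3×3` matrices `A`, `B` with rows `A_i`, `B_i`, the row-wise matrix cross product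
`C = A × B`, with `C₁ = A₂·B₃ − A₃·B₂`, `C₂ = −(A₁·B₃ − A₃·B₁)`, `C₃ = A₁·B₂ − A₂·B₁`. -/
def mcross3 (A B : Fin 3 → Fin 3 → ℝ) : Fin 3 → ℝ :=
  ![(∑ j, A 1 j * B 2 j) - (∑ j, A 2 j * B 1 j),
    -((∑ j, A 0 j * B 2 j) - (∑ j, A 2 j * B 0 j)),
    (∑ j, A 0 j * B 1 j) - (∑ j, A 1 j * B 0 j)]

/- Writing `curl3` and `mcross3` cyclically in the index lets the identity be proved for a
general component, without case analysis. -/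

lemma curl3_apply (v : (Fin 3 → ℝ) → Fin 3 → ℝ) (x : Fin 3 → ℝ) (i : Fin 3) :
    curl3 v x i = pd3 (i + 1) (fun y => v y (i + 2)) x - pd3 (i + 2) (fun y => v y (i + 1)) x := by
  fin_cases i <;> rfl

lemma mcross3_apply (A B : Fin 3 → Fin 3 → ℝ) (i : Fin 3) :
    mcross3 A B i = ∑ j, A (i + 1) j * B (i + 2) j - ∑ j, A (i + 2) j * B (i + 1) j := by
  fin_cases i <;> simp [mcross3]

section Calculus

variable {f g : (Fin 3 → ℝ) → ℝ} {x : Fin 3 → ℝ}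

lemma pd3_sub (hf : DifferentiableAt ℝ f x) (hg : DifferentiableAt ℝ g x) (j : Fin 3) :
    pd3 j (fun y => f y - g y) x = pd3 j f x - pd3 j g x := by
  simp [pd3, fderiv_fun_sub hf hg]

lemma pd3_mul (hf : DifferentiableAt ℝ f x) (hg : DifferentiableAt ℝ g x) (j : Fin 3) :
    pd3 j (fun y => f y * g y) x = pd3 j f x * g x + f x * pd3 j g x := by
  simp only [pd3, fderiv_fun_mul hf hg, add_apply, smul_apply, smul_eq_mul]
  ring

lemma pd3_sum {ι : Type*} {s : Finset ι} {F : ι → (Fin 3 → ℝ) → ℝ}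
    (hF : ∀ k ∈ s, DifferentiableAt ℝ (F k) x) (j : Fin 3) :
    pd3 j (fun y => ∑ k ∈ s, F k y) x = ∑ k ∈ s, pd3 j (F k) x := by
  simp [pd3, fderiv_fun_sum hF]

lemma contDiff_pd3 (hf : ContDiff ℝ 2 f) (j : Fin 3) : ContDiff ℝ 1 (pd3 j f) :=
  (hf.fderiv_right le_rfl).clm_apply contDiff_const

lemma pd3_pd3 (hf : ContDiff ℝ 2 f) (i j : Fin 3) :
    pd3 i (pd3 j f) x = fderiv ℝ (fderiv ℝ f) x (Pi.single i 1) (Pi.single j 1) := by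
  have hf' : DifferentiableAt ℝ (fderiv ℝ f) x :=
    (hf.fderiv_right le_rfl).differentiable one_ne_zero x
  change fderiv ℝ (fun y => fderiv ℝ f y (Pi.single j 1)) x (Pi.single i 1) = _
  simp [fderiv_clm_apply hf' (differentiableAt_const _)]

lemma pd3_pd3_comm (hf : ContDiff ℝ 2 f) (i j : Fin 3) :
    pd3 i (pd3 j f) x = pd3 j (pd3 i f) x := by
  rw [pd3_pd3 hf, pd3_pd3 hf]
  exact hf.contDiffAt.isSymmSndFDerivAt (by simp [minSmoothness_of_isRCLikeNormedField]) _ _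

end Calculus

section VectorCalculus

variable {β v : (Fin 3 → ℝ) → Fin 3 → ℝ}

lemma differentiableAt_pd3_apply (hv : ContDiff ℝ 2 v) (j k : Fin 3) (x : Fin 3 → ℝ) :
    DifferentiableAt ℝ (pd3 j (fun y => v y k)) x :=
  (contDiff_pd3 (contDiff_pi.1 hv k) j).differentiable one_ne_zero x

lemma pd3_convect3_apply {x : Fin 3 → ℝ} (hβ : DifferentiableAt ℝ β x) (hv : ContDiff ℝ 2 v) (i k : Fin 3) :
    pd3 i (fun y => convect3 β v y k) x
      = ∑ j, pd3 i (fun y => β y j) x * pd3 j (fun y => v y k) x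
        + ∑ j, β x j * pd3 j (pd3 i (fun y => v y k)) x := by
  have hβj : ∀ j, DifferentiableAt ℝ (fun y => β y j) x := differentiableAt_pi.1 hβ
  rw [← Finset.sum_add_distrib]
  refine (pd3_sum (F := fun j y => β y j * pd3 j (fun y => v y k) y)
    (fun j _ => (hβj j).mul (differentiableAt_pd3_apply hv j k x)) i).trans ?_
  refine Finset.sum_congr rfl fun j _ => ?_
  rw [pd3_mul (hβj j) (differentiableAt_pd3_apply hv j k x),
    pd3_pd3_comm (contDiff_pi.1 hv k)]

lemma pd3_curl3_apply (hv : ContDiff ℝ 2 v) (i j : Fin 3) (x : Fin 3 → ℝ) :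
    pd3 j (fun y => curl3 v y i) x
      = pd3 j (pd3 (i + 1) (fun y => v y (i + 2))) x
        - pd3 j (pd3 (i + 2) (fun y => v y (i + 1))) x := by
  simp only [curl3_apply]
  exact pd3_sub (differentiableAt_pd3_apply hv _ _ x) (differentiableAt_pd3_apply hv _ _ x) j

end VectorCalculus

/-- `curl((β·∇)v) = (β·∇)(curl v) + ((∇β)ᵗ × ∇v)` for `C²` vector fields on `ℝ³`,
where `(∇v)_{ij} = ∂_j v_i` is the Jacobian and `(∇β)ᵗ` its transpose for `β`. -/
theorem stmt0 (β v : (Fin 3 → ℝ) → Fin 3 → ℝ)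
    (hβ : ContDiff ℝ 2 β) (hv : ContDiff ℝ 2 v) (x : Fin 3 → ℝ) :
    curl3 (convect3 β v) x
      = fun i => convect3 β (curl3 v) x i
          + mcross3 (fun i j => pd3 i (fun y => β y j) x)
              (fun i j => pd3 j (fun y => v y i) x) i := by
  have hβx : DifferentiableAt ℝ β x := hβ.differentiable two_ne_zero x
  funext i
  rw [curl3_apply, pd3_convect3_apply hβx hv, pd3_convect3_apply hβx hv, mcross3_apply]
  simp only [convect3, pd3_curl3_apply hv, mul_sub, Finset.sum_sub_distrib]
  ring
end

section
/- Let n be a positive integer, φ(x,y) = sin(nπx) sin(nπy), β = (∂_y φ, −∂_x φ), p(x,y) = n²π² (cos²(nπx) − sin²(nπy))/2, let σ : ℝ² → ℝ be continuous, and set f = σβ. Then u = β and p solve the linear model problem pointwise on the unit square: div(u ⊗ β) + σ u + ∇p = f and div u = 0 on (0,1)², and u·n = 0 on the boundary of the unit square (i.e. β₁(0,y) = β₁(1,y) = 0 for all y and β₂(x,0) = β₂(x,1) = 0 for all x). -/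
open Real

/-- The streamfunction `φ(x,y) = sin(nπx) sin(nπy)`. -/
noncomputable def phiN (n : ℕ) (x y : ℝ) : ℝ :=
  Real.sin (n * π * x) * Real.sin (n * π * y)

/-- First component of `β = (∂_y φ, −∂_x φ)`. -/
noncomputable def beta1 (n : ℕ) (x y : ℝ) : ℝ :=
  deriv (fun t => phiN n x t) y

/-- Second component of `β = (∂_y φ, −∂_x φ)`. -/
noncomputable def beta2 (n : ℕ) (x y : ℝ) : ℝ :=
  -deriv (fun s => phiN n s y) x

/-- The pressure `p(x,y) = n²π² (cos²(nπx) − sin²(nπy))/2`. -/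
noncomputable def pVortex (n : ℕ) (x y : ℝ) : ℝ :=
  (n : ℝ) ^ 2 * π ^ 2 * ((Real.cos (n * π * x)) ^ 2 - (Real.sin (n * π * y)) ^ 2) / 2

/-!
Since `u = β` and `f = σ β`, the reaction term cancels the forcing and the momentum equation
reduces to `div(β ⊗ β) + ∇p = 0`: the pair `(β, p)` is a steady (Taylor–Green) solution of the
Euler equations. With `β = nπ (sin(nπx) cos(nπy), -cos(nπx) sin(nπy))` each component is an
explicit computation closed by `sin² + cos² = 1`; `div β = 0` because `β` is the rotated
gradient of `φ`, and the normal component of `β` vanishes on the boundary of the square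
because `sin` vanishes on `πℤ`.
-/

lemma hasDerivAt_sin_const_mul (a t : ℝ) :
    HasDerivAt (fun s => sin (a * s)) (a * cos (a * t)) t := by
  simpa [mul_comm] using (hasDerivAt_const_mul (x := t) a).sin

lemma hasDerivAt_cos_const_mul (a t : ℝ) :
    HasDerivAt (fun s => cos (a * s)) (-(a * sin (a * t))) t := by
  simpa [mul_comm] using (hasDerivAt_const_mul (x := t) a).cos

lemma beta1_eq (n : ℕ) (x y : ℝ) :
    beta1 n x y = n * π * sin (n * π * x) * cos (n * π * y) := by
  unfold beta1 phiN
  rw [((hasDerivAt_sin_const_mul _ y).const_mul _).deriv]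
  ring

lemma beta2_eq (n : ℕ) (x y : ℝ) :
    beta2 n x y = -(n * π * cos (n * π * x) * sin (n * π * y)) := by
  unfold beta2 phiN
  rw [((hasDerivAt_sin_const_mul _ x).mul_const _).deriv]

section vortex

variable (n : ℕ) (x y : ℝ)

lemma hasDerivAt_beta1_fst :
    HasDerivAt (fun s => beta1 n s y) ((n * π) ^ 2 * cos (n * π * x) * cos (n * π * y)) x := by
  simp only [beta1_eq]
  exact ((hasDerivAt_sin_const_mul _ x).const_mul (n * π)).mul_const (cos (n * π * y))
    |>.congr_deriv (by ring)

lemma hasDerivAt_beta1_snd :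
    HasDerivAt (fun t => beta1 n x t) (-((n * π) ^ 2 * sin (n * π * x) * sin (n * π * y))) y := by
  simp only [beta1_eq]
  exact (hasDerivAt_cos_const_mul _ y).const_mul (n * π * sin (n * π * x))
    |>.congr_deriv (by ring)

lemma hasDerivAt_beta2_fst :
    HasDerivAt (fun s => beta2 n s y) ((n * π) ^ 2 * sin (n * π * x) * sin (n * π * y)) x := by
  simp only [beta2_eq]
  exact (((hasDerivAt_cos_const_mul _ x).const_mul (n * π)).mul_const (sin (n * π * y))).neg
    |>.congr_deriv (by ring)

lemma hasDerivAt_beta2_snd :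
    HasDerivAt (fun t => beta2 n x t) (-((n * π) ^ 2 * cos (n * π * x) * cos (n * π * y))) y := by
  simp only [beta2_eq]
  exact ((hasDerivAt_sin_const_mul _ y).const_mul (n * π * cos (n * π * x))).neg
    |>.congr_deriv (by ring)

lemma hasDerivAt_pVortex_fst :
    HasDerivAt (fun s => pVortex n s y) (-((n * π) ^ 3 * sin (n * π * x) * cos (n * π * x))) x := by
  unfold pVortex
  exact ((((hasDerivAt_cos_const_mul _ x).pow 2).sub_const (sin (n * π * y) ^ 2)).const_mul
    ((n : ℝ) ^ 2 * π ^ 2)).div_const 2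
    |>.congr_deriv (by ring)

lemma hasDerivAt_pVortex_snd :
    HasDerivAt (fun t => pVortex n x t) (-((n * π) ^ 3 * sin (n * π * y) * cos (n * π * y))) y := by
  unfold pVortex
  exact ((((hasDerivAt_sin_const_mul _ y).pow 2).const_sub (cos (n * π * x) ^ 2)).const_mul
    ((n : ℝ) ^ 2 * π ^ 2)).div_const 2
    |>.congr_deriv (by ring)

lemma div_beta_tensor_beta_add_grad_pVortex_fst :
    deriv (fun s => beta1 n s y * beta1 n s y) x + deriv (fun t => beta1 n x t * beta2 n x t) y
      + deriv (fun s => pVortex n s y) x = 0 := by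
  rw [((hasDerivAt_beta1_fst n x y).fun_mul (hasDerivAt_beta1_fst n x y)).deriv,
    ((hasDerivAt_beta1_snd n x y).fun_mul (hasDerivAt_beta2_snd n x y)).deriv,
    (hasDerivAt_pVortex_fst n x y).deriv, beta1_eq, beta2_eq]
  linear_combination ((n : ℝ) * π) ^ 3 * sin (n * π * x) * cos (n * π * x)
    * sin_sq_add_cos_sq ((n : ℝ) * π * y)

lemma div_beta_tensor_beta_add_grad_pVortex_snd :
    deriv (fun s => beta2 n s y * beta1 n s y) x + deriv (fun t => beta2 n x t * beta2 n x t) y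
      + deriv (fun t => pVortex n x t) y = 0 := by
  rw [((hasDerivAt_beta2_fst n x y).fun_mul (hasDerivAt_beta1_fst n x y)).deriv,
    ((hasDerivAt_beta2_snd n x y).fun_mul (hasDerivAt_beta2_snd n x y)).deriv,
    (hasDerivAt_pVortex_snd n x y).deriv, beta1_eq, beta2_eq]
  linear_combination ((n : ℝ) * π) ^ 3 * sin (n * π * y) * cos (n * π * y)
    * sin_sq_add_cos_sq ((n : ℝ) * π * x)

lemma div_beta :
    deriv (fun s => beta1 n s y) x + deriv (fun t => beta2 n x t) y = 0 := by
  rw [(hasDerivAt_beta1_fst n x y).deriv, (hasDerivAt_beta2_snd n x y).deriv]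
  ring

end vortex

theorem stmt6_general (n : ℕ) (σ : ℝ × ℝ → ℝ) :
    -- momentum equation div(u ⊗ β) + σ u + ∇p = σ β, componentwise, on (0,1)²
    (∀ x y : ℝ, x ∈ Set.Ioo (0 : ℝ) 1 → y ∈ Set.Ioo (0 : ℝ) 1 →
      (deriv (fun s => beta1 n s y * beta1 n s y) x
          + deriv (fun t => beta1 n x t * beta2 n x t) y
          + σ (x, y) * beta1 n x y + deriv (fun s => pVortex n s y) x
        = σ (x, y) * beta1 n x y) ∧
      (deriv (fun s => beta2 n s y * beta1 n s y) x
          + deriv (fun t => beta2 n x t * beta2 n x t) y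
          + σ (x, y) * beta2 n x y + deriv (fun t => pVortex n x t) y
        = σ (x, y) * beta2 n x y)) ∧
    -- incompressibility div u = 0 on (0,1)²
    (∀ x y : ℝ, x ∈ Set.Ioo (0 : ℝ) 1 → y ∈ Set.Ioo (0 : ℝ) 1 →
      deriv (fun s => beta1 n s y) x + deriv (fun t => beta2 n x t) y = 0) ∧
    -- boundary condition u·n = 0 on the boundary of the unit square
    (∀ y : ℝ, beta1 n 0 y = 0 ∧ beta1 n 1 y = 0) ∧
    (∀ x : ℝ, beta2 n x 0 = 0 ∧ beta2 n x 1 = 0) := by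
  refine ⟨fun x y _ _ => ⟨?_, ?_⟩, fun x y _ _ => div_beta n x y, fun y => ⟨?_, ?_⟩,
    fun x => ⟨?_, ?_⟩⟩
  · linear_combination div_beta_tensor_beta_add_grad_pVortex_fst n x y
  · linear_combination div_beta_tensor_beta_add_grad_pVortex_snd n x y
  all_goals simp [beta1_eq, beta2_eq, sin_nat_mul_pi]

/-- With `φ(x,y) = sin(nπx) sin(nπy)`, `β = (∂_y φ, −∂_x φ)`,
`p(x,y) = n²π² (cos²(nπx) − sin²(nπy))/2`, `σ : ℝ² → ℝ` continuous and `f = σβ`,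
the pair `u = β`, `p` solves the linear model problem on the unit square:
`div(u ⊗ β) + σ u + ∇p = f` and `div u = 0` on `(0,1)²`, together with the
boundary condition `u·n = 0` on the boundary of the unit square. -/
theorem stmt6 (n : ℕ) (hn : 0 < n) (σ : ℝ × ℝ → ℝ) (hσ : Continuous σ) :
    -- momentum equation div(u ⊗ β) + σ u + ∇p = σ β, componentwise, on (0,1)²
    (∀ x y : ℝ, x ∈ Set.Ioo (0 : ℝ) 1 → y ∈ Set.Ioo (0 : ℝ) 1 →
      (deriv (fun s => beta1 n s y * beta1 n s y) x
          + deriv (fun t => beta1 n x t * beta2 n x t) y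
          + σ (x, y) * beta1 n x y + deriv (fun s => pVortex n s y) x
        = σ (x, y) * beta1 n x y) ∧
      (deriv (fun s => beta2 n s y * beta1 n s y) x
          + deriv (fun t => beta2 n x t * beta2 n x t) y
          + σ (x, y) * beta2 n x y + deriv (fun t => pVortex n x t) y
        = σ (x, y) * beta2 n x y)) ∧
    -- incompressibility div u = 0 on (0,1)²
    (∀ x y : ℝ, x ∈ Set.Ioo (0 : ℝ) 1 → y ∈ Set.Ioo (0 : ℝ) 1 →
      deriv (fun s => beta1 n s y) x + deriv (fun t => beta2 n x t) y = 0) ∧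
    -- boundary condition u·n = 0 on the boundary of the unit square
    (∀ y : ℝ, beta1 n 0 y = 0 ∧ beta1 n 1 y = 0) ∧
    (∀ x : ℝ, beta2 n x 0 = 0 ∧ beta2 n x 1 = 0) :=
  stmt6_general n σ
end

section
/- Let σ : ℝ^d → ℝ be continuous with σ(x) ≥ σ₀ > 0 for all x, let β : ℝ^d → ℝ^d be continuously differentiable with div β = 0, let p : ℝ^d → ℝ be continuously differentiable, and let u : ℝ^d → ℝ^d be continuously differentiable with compact support and div u = 0. If div(u ⊗ β) + σ u + ∇p = 0 pointwise on ℝ^d, then u ≡ 0. -/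
/-!
Testing the momentum equation with `u` and using `div β = div u = 0` gives the pointwise identity
`u · (div (u ⊗ β) + ∇p) = div (½|u|² β + p u)`, so the flux `F = ½|u|² β + p u` satisfies
`div F = -σ|u|² ≤ 0`. Since `F` is a compactly supported `C¹` field, `div F` has integral zero,
and a continuous nonpositive function with zero integral vanishes; hence `σ|u|² ≡ 0`, and
`σ > 0` forces `u ≡ 0`.
-/

open MeasureTheory Finset

/-- Partial derivative in direction `j` of a scalar function on `ℝ^d`. -/
noncomputable def pd (d : ℕ) (j : Fin d) (f : (Fin d → ℝ) → ℝ) (x : Fin d → ℝ) : ℝ :=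
  fderiv ℝ f x (Pi.single j 1)

theorem integral_fderiv_apply_eq_zero {E G : Type*} [NormedAddCommGroup E] [NormedSpace ℝ E]
    [FiniteDimensional ℝ E] [MeasurableSpace E] [BorelSpace E] {μ : Measure E}
    [μ.IsAddHaarMeasure] [NormedAddCommGroup G] [NormedSpace ℝ G] {g : E → G}
    (hg : ContDiff ℝ 1 g) (hcs : HasCompactSupport g) (v : E) :
    ∫ x, fderiv ℝ g x v ∂μ = 0 := by
  have hint : Integrable (fun x => fderiv ℝ g x v) μ :=
    ((hg.continuous_fderiv one_ne_zero).clm_apply continuous_const).integrable_of_hasCompactSupport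
      (hcs.fderiv_apply ℝ v)
  have := integral_smul_fderiv_eq_neg_fderiv_smul_of_integrable (μ := μ) (v := v)
    (f := fun _ => (1 : ℝ)) (g := g) (by simp) (by simpa using hint)
    (by simpa using hg.continuous.integrable_of_hasCompactSupport hcs)
    (fun x _ => differentiableAt_const _) (fun x _ => hg.differentiable one_ne_zero x)
  simpa using this

section
variable {d : ℕ}

theorem sum_mul_pd (f : (Fin d → ℝ) → ℝ) (x w : Fin d → ℝ) :
    ∑ j, w j * pd d j f x = fderiv ℝ f x w := by
  conv_rhs => rw [← univ_sum_single w]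
  simp only [map_sum]
  refine sum_congr rfl fun j _ => ?_
  have hsingle : Pi.single j (w j) = w j • Pi.single j (1 : ℝ) := by
    rw [← Pi.single_smul, smul_eq_mul, mul_one]
  rw [hsingle, map_smul, smul_eq_mul, pd]

theorem pd_add {f g : (Fin d → ℝ) → ℝ} {x : Fin d → ℝ} (j : Fin d)
    (hf : DifferentiableAt ℝ f x) (hg : DifferentiableAt ℝ g x) :
    pd d j (fun y => f y + g y) x = pd d j f x + pd d j g x := by
  simp [pd, fderiv_fun_add hf hg]

theorem pd_mul {f g : (Fin d → ℝ) → ℝ} {x : Fin d → ℝ} (j : Fin d)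
    (hf : DifferentiableAt ℝ f x) (hg : DifferentiableAt ℝ g x) :
    pd d j (fun y => f y * g y) x = f x * pd d j g x + g x * pd d j f x := by
  simp [pd, fderiv_fun_mul hf hg]

theorem continuous_pd {f : (Fin d → ℝ) → ℝ} (j : Fin d) (hf : ContDiff ℝ 1 f) :
    Continuous (pd d j f) :=
  (hf.continuous_fderiv one_ne_zero).clm_apply continuous_const

theorem HasCompactSupport.pd {f : (Fin d → ℝ) → ℝ} (j : Fin d) (hf : HasCompactSupport f) :
    HasCompactSupport (pd d j f) :=
  hf.fderiv_apply ℝ _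

noncomputable def divergence (v : (Fin d → ℝ) → Fin d → ℝ) (x : Fin d → ℝ) : ℝ :=
  ∑ j, pd d j (fun y => v y j) x

theorem divergence_add {v w : (Fin d → ℝ) → Fin d → ℝ} {x : Fin d → ℝ}
    (hv : DifferentiableAt ℝ v x) (hw : DifferentiableAt ℝ w x) :
    divergence (fun y j => v y j + w y j) x = divergence v x + divergence w x := by
  simp only [divergence, ← sum_add_distrib]
  exact sum_congr rfl fun j _ =>
    pd_add j (differentiableAt_pi.1 hv j) (differentiableAt_pi.1 hw j)

theorem divergence_mul {f : (Fin d → ℝ) → ℝ} {v : (Fin d → ℝ) → Fin d → ℝ} {x : Fin d → ℝ}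
    (hf : DifferentiableAt ℝ f x) (hv : DifferentiableAt ℝ v x) :
    divergence (fun y j => f y * v y j) x = f x * divergence v x + fderiv ℝ f x (v x) := by
  simp only [divergence, ← sum_mul_pd, mul_sum, ← sum_add_distrib]
  exact sum_congr rfl fun j _ => pd_mul j hf (differentiableAt_pi.1 hv j)

theorem continuous_divergence {v : (Fin d → ℝ) → Fin d → ℝ} (hv : ContDiff ℝ 1 v) :
    Continuous (divergence v) :=
  continuous_finsetSum _ fun j _ => continuous_pd j (contDiff_pi.1 hv j)

theorem HasCompactSupport.divergence {v : (Fin d → ℝ) → Fin d → ℝ} (hv : HasCompactSupport v) :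
    HasCompactSupport (divergence v) := by
  refine hv.mono' fun x hx => ?_
  by_contra hxv
  refine hx (sum_eq_zero fun j _ => ?_)
  have hxj : x ∉ tsupport fun y => v y j :=
    fun h => hxv (tsupport_comp_subset (g := fun w : Fin d → ℝ => w j) rfl v h)
  rw [_root_.pd, fderiv_of_notMem_tsupport ℝ hxj, zero_apply]

theorem integral_divergence_eq_zero {v : (Fin d → ℝ) → Fin d → ℝ} (hv : ContDiff ℝ 1 v)
    (hcs : HasCompactSupport v) : ∫ x, divergence v x = 0 := by
  have hvj (j : Fin d) : ContDiff ℝ 1 (fun y => v y j) := contDiff_pi.1 hv j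
  have hcsj (j : Fin d) : HasCompactSupport (fun y => v y j) :=
    hcs.comp_left (g := fun w : Fin d → ℝ => w j) rfl
  have hint (j : Fin d) : Integrable (pd d j fun y => v y j) :=
    (continuous_pd j (hvj j)).integrable_of_hasCompactSupport ((hcsj j).pd j)
  simp only [divergence]
  rw [integral_finsetSum _ fun j _ => hint j]
  exact sum_eq_zero fun j _ => integral_fderiv_apply_eq_zero (hvj j) (hcsj j) _

theorem divergence_eq_zero_of_nonpos {v : (Fin d → ℝ) → Fin d → ℝ} (hv : ContDiff ℝ 1 v)
    (hcs : HasCompactSupport v) (hle : ∀ x, divergence v x ≤ 0) (x : Fin d → ℝ) :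
    divergence v x = 0 := by
  by_contra hx
  have hpos := (continuous_divergence hv).neg.integral_pos_of_hasCompactSupport_nonneg_nonzero
    (μ := volume) hcs.divergence.neg (fun y => neg_nonneg.2 (hle y)) (neg_ne_zero.2 hx)
  rw [Pi.neg_def, integral_neg, integral_divergence_eq_zero hv hcs, neg_zero] at hpos
  exact lt_irrefl 0 hpos

theorem fderiv_half_sum_sq_apply {u : (Fin d → ℝ) → Fin d → ℝ} {x : Fin d → ℝ}
    (hu : DifferentiableAt ℝ u x) (w : Fin d → ℝ) :
    fderiv ℝ (fun y => (∑ i, u y i ^ 2) / 2) x w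
      = ∑ i, u x i * fderiv ℝ (fun y => u y i) x w := by
  have hui (i : Fin d) : DifferentiableAt ℝ (fun y => u y i) x := differentiableAt_pi.1 hu i
  have hsum : HasFDerivAt (fun y => ∑ i, u y i ^ 2)
      (∑ i, (2 • u x i ^ (2 - 1)) • fderiv ℝ (fun y => u y i) x) x :=
    HasFDerivAt.fun_sum fun i _ => (hui i).hasFDerivAt.pow 2
  simp only [div_eq_mul_inv]
  rw [(hsum.mul_const 2⁻¹).fderiv]
  simp only [Nat.add_one_sub_one, pow_one, nsmul_eq_mul, Nat.cast_ofNat, smul_apply,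
    _root_.sum_apply, smul_eq_mul, mul_sum]
  exact sum_congr rfl fun i _ => by ring

theorem divergence_energy_flux {u β : (Fin d → ℝ) → Fin d → ℝ} {p : (Fin d → ℝ) → ℝ}
    {x : Fin d → ℝ} (hu : DifferentiableAt ℝ u x) (hβ : DifferentiableAt ℝ β x)
    (hp : DifferentiableAt ℝ p x) (hdivβ : divergence β x = 0) (hdivu : divergence u x = 0) :
    divergence (fun y j => (∑ i, u y i ^ 2) / 2 * β y j + p y * u y j) x
      = ∑ i, u x i * (divergence (fun y j => u y i * β y j) x + pd d i p x) := by
  have hui (i : Fin d) : DifferentiableAt ℝ (fun y => u y i) x := differentiableAt_pi.1 hu i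
  have hE : DifferentiableAt ℝ (fun y => (∑ i, u y i ^ 2) / 2) x := by fun_prop
  rw [divergence_add (v := fun y j => (∑ i, u y i ^ 2) / 2 * β y j) (w := fun y j => p y * u y j)
      (by fun_prop) (by fun_prop),
    divergence_mul hE hβ, divergence_mul hp hu, hdivβ, hdivu, fderiv_half_sum_sq_apply hu,
    ← sum_mul_pd]
  simp only [divergence_mul (hui _) hβ, hdivβ, mul_zero, zero_add, mul_add, sum_add_distrib]

end

theorem stmt10_general (d : ℕ) (σ : (Fin d → ℝ) → ℝ) (σ₀ : ℝ)
    (hσ₀ : 0 < σ₀) (hσ : ∀ x, σ₀ ≤ σ x)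
    (β : (Fin d → ℝ) → Fin d → ℝ) (hβ : ContDiff ℝ 1 β)
    (hdivβ : ∀ x, ∑ j, pd d j (fun y => β y j) x = 0)
    (p : (Fin d → ℝ) → ℝ) (hp : ContDiff ℝ 1 p)
    (u : (Fin d → ℝ) → Fin d → ℝ) (hu : ContDiff ℝ 1 u) (hcs : HasCompactSupport u)
    (hdivu : ∀ x, ∑ j, pd d j (fun y => u y j) x = 0)
    (heq : ∀ (x : Fin d → ℝ) (i : Fin d),
      (∑ j, pd d j (fun y => u y i * β y j) x) + σ x * u x i + pd d i p x = 0) :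
    ∀ x, u x = 0 := by
  set F : (Fin d → ℝ) → Fin d → ℝ := fun y j => (∑ i, u y i ^ 2) / 2 * β y j + p y * u y j
  have hdivF (x : Fin d → ℝ) : divergence F x = -(σ x * ∑ i, u x i ^ 2) := by
    rw [divergence_energy_flux (hu.differentiable one_ne_zero x) (hβ.differentiable one_ne_zero x)
      (hp.differentiable one_ne_zero x) (hdivβ x) (hdivu x), mul_sum, ← sum_neg_distrib]
    exact sum_congr rfl fun i _ => by unfold divergence; linear_combination u x i * heq x i
  have hF : ContDiff ℝ 1 F := by fun_prop
  have hFcs : HasCompactSupport F := by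
    refine hcs.mono (Function.support_subset_iff'.2 fun y hy => ?_)
    ext j
    simp [F, Function.notMem_support.1 hy]
  have hσpos (x : Fin d → ℝ) : 0 < σ x := hσ₀.trans_le (hσ x)
  have hsq (x : Fin d → ℝ) : σ x * ∑ i, u x i ^ 2 = 0 := by
    have := divergence_eq_zero_of_nonpos hF hFcs (fun y => by
      rw [hdivF, neg_nonpos]; exact mul_nonneg (hσpos y).le (sum_nonneg fun i _ => sq_nonneg _)) x
    rwa [hdivF, neg_eq_zero] at this
  intro x
  funext i
  have := (sum_eq_zero_iff_of_nonneg fun i _ => sq_nonneg (u x i)).1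
    ((mul_eq_zero.1 (hsq x)).resolve_left (hσpos x).ne') i (mem_univ i)
  exact pow_eq_zero_iff two_ne_zero |>.1 this

/-- Uniqueness mechanism for the linear model problem: let `σ : ℝ^d → ℝ` be continuous with
`σ ≥ σ₀ > 0`, let `β` be `C¹` with `div β = 0`, let `p` be `C¹`, and let `u` be `C¹` with
compact support and `div u = 0`. If `div(u ⊗ β) + σ u + ∇p = 0` pointwise on `ℝ^d`,
where `(div(u ⊗ β))_i = Σ_j ∂_j (u_i β_j)`, then `u ≡ 0`. -/
theorem stmt10 (d : ℕ) (σ : (Fin d → ℝ) → ℝ) (σ₀ : ℝ) (hσc : Continuous σ)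
    (hσ₀ : 0 < σ₀) (hσ : ∀ x, σ₀ ≤ σ x)
    (β : (Fin d → ℝ) → Fin d → ℝ) (hβ : ContDiff ℝ 1 β)
    (hdivβ : ∀ x, ∑ j, pd d j (fun y => β y j) x = 0)
    (p : (Fin d → ℝ) → ℝ) (hp : ContDiff ℝ 1 p)
    (u : (Fin d → ℝ) → Fin d → ℝ) (hu : ContDiff ℝ 1 u) (hcs : HasCompactSupport u)
    (hdivu : ∀ x, ∑ j, pd d j (fun y => u y j) x = 0)
    (heq : ∀ (x : Fin d → ℝ) (i : Fin d),
      (∑ j, pd d j (fun y => u y i * β y j) x) + σ x * u x i + pd d i p x = 0) :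
    ∀ x, u x = 0 :=
  stmt10_general d σ σ₀ hσ₀ hσ β hβ hdivβ p hp u hu hcs hdivu heq
end
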